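/- If → is an orientation on a Fano plane F and σ is an automorphism of F, then σ preserves → (i.e., σ is an automorphism of the oriented Fano plane (F,→)) if and only if σ is an automorphism of the associated orthogonal Fano plane F_→. -/

import Mathlib

/-- A Steiner triple system: every block has 3 points and every pair of
distinct points lies in exactly one block. -/
def IsSteiner {V : Type*} [DecidableEq V] (B : Finset (Finset V)) : Prop :=
  (∀ b ∈ B, b.card = 3) ∧
  ∀ x y : V, x ≠ y → ∃! b : Finset V, b ∈ B ∧ x ∈ b ∧ y ∈ b

/-- A Fano plane: a Steiner triple system on a 7-point set. -/
def IsFano {V : Type*} [DecidableEq V] [Fintype V] (B : Finset (Finset V)) : Prop :=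
  Fintype.card V = 7 ∧ IsSteiner B

/-- Two systems on the same point set are disjoint if they share no block. -/
def DisjointSTS {V : Type*} [DecidableEq V] (B1 B2 : Finset (Finset V)) : Prop :=
  ∀ b : Finset V, ¬ (b ∈ B1 ∧ b ∈ B2)

/-- Orthogonality of two Steiner triple systems: disjoint, and two distinct
pairs lying in blocks of the first system with a common third point never have
the same third point in the second system. -/
def OrthogonalSTS {V : Type*} [DecidableEq V] (B1 B2 : Finset (Finset V)) : Prop :=
  DisjointSTS B1 B2 ∧
  ∀ x y z u v a b : V, ({x, y} : Finset V) ≠ ({u, v} : Finset V) →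
    ({x, y, z} : Finset V) ∈ B1 → ({u, v, z} : Finset V) ∈ B1 →
    ({x, y, a} : Finset V) ∈ B2 → ({u, v, b} : Finset V) ∈ B2 → a ≠ b

/-- A permutation is an automorphism of a block set if it maps blocks to blocks. -/
def IsAutomorphism {V : Type*} [DecidableEq V] (B : Finset (Finset V)) (σ : Equiv.Perm V) : Prop :=
  ∀ b : Finset V, b.image σ ∈ B ↔ b ∈ B

/-- An orientation on a Fano plane `B`: an antisymmetric relation that cyclically
orients every block, and such that for every point `x` the three out-neighbors of
`x` on the three blocks through `x` themselves form a block. -/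
def IsOrientation {V : Type*} [DecidableEq V] (B : Finset (Finset V)) (r : V → V → Prop) : Prop :=
  (∀ x y : V, r x y → ¬ r y x) ∧
  (∀ x1 x2 x3 : V, ({x1, x2, x3} : Finset V) ∈ B →
    (r x1 x2 ∧ r x2 x3 ∧ r x3 x1) ∨ (r x1 x3 ∧ r x3 x2 ∧ r x2 x1)) ∧
  (∀ x y1 z1 y2 z2 y3 z3 : V,
    ({x, y1, z1} : Finset V) ∈ B → ({x, y2, z2} : Finset V) ∈ B → ({x, y3, z3} : Finset V) ∈ B →
    ({x, y1, z1} : Finset V) ≠ ({x, y2, z2} : Finset V) →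
    ({x, y1, z1} : Finset V) ≠ ({x, y3, z3} : Finset V) →
    ({x, y2, z2} : Finset V) ≠ ({x, y3, z3} : Finset V) →
    r x y1 → r x y2 → r x y3 → ({y1, y2, y3} : Finset V) ∈ B)

open scoped Classical in
/-- The block family `T(v) = { x | x → v }`, `v ∈ V`, associated with an
orientation `r` (written `F_→` in the paper). -/
noncomputable def orientBlocks {V : Type*} [DecidableEq V] [Fintype V] (r : V → V → Prop) :
    Finset (Finset V) :=
  Finset.univ.image (fun v => Finset.univ.filter (fun x => r x v))

/-!
A permutation preserving `→` maps `T(v)` onto `T(σ v)`, so it permutes the blocks of `F_→`.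
Conversely, the out-neighbours of `v` form a line of `F`, and from this one sees that `v` is the
only point outside the triangle `T(v)` lying on no line through two of its vertices. An
automorphism of `F` respects this description, so if it maps `T(v)` to some `T(w)` then
`w = σ v`, which says exactly that `σ` preserves `→`.
-/

open Finset

lemma exists_eq_triple_of_card_eq_three {V : Type*} [DecidableEq V] {b : Finset V}
    (hb : #b = 3) {x y : V} (hx : x ∈ b) (hy : y ∈ b) (hxy : x ≠ y) :
    ∃ z, b = {x, y, z} := by
  have hy' : y ∈ b.erase x := mem_erase.2 ⟨hxy.symm, hy⟩
  obtain ⟨z, hz⟩ : ∃ z, (b.erase x).erase y = {z} := card_eq_one.1 <| by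
    rw [card_erase_of_mem hy', card_erase_of_mem hx, hb]
  exact ⟨z, by rw [← hz, insert_erase hy', insert_erase hx]⟩

namespace IsSteiner

variable {V : Type*} [DecidableEq V] {B : Finset (Finset V)}

lemma ne_of_triple_mem (hS : IsSteiner B) {x y z : V} (h : ({x, y, z} : Finset V) ∈ B) :
    x ≠ y ∧ x ≠ z ∧ y ≠ z := by
  have h3 := hS.1 _ h
  refine ⟨?_, ?_, ?_⟩ <;> rintro rfl <;>
    simp only [mem_insert, mem_singleton, true_or, or_true, insert_eq_of_mem] at h3 <;>
    exact (card_le_two.trans_lt (by norm_num)).ne h3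

lemma eq_of_mem_of_mem (hS : IsSteiner B) {x y : V} (hxy : x ≠ y) {c d : Finset V}
    (hc : c ∈ B) (hd : d ∈ B) (hxc : x ∈ c) (hyc : y ∈ c) (hxd : x ∈ d) (hyd : y ∈ d) :
    c = d :=
  (hS.2 x y hxy).unique ⟨hc, hxc, hyc⟩ ⟨hd, hxd, hyd⟩

lemma exists_triple_mem (hS : IsSteiner B) {x y : V} (hxy : x ≠ y) :
    ∃ z, ({x, y, z} : Finset V) ∈ B := by
  obtain ⟨b, ⟨hb, hx, hy⟩, -⟩ := hS.2 x y hxy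
  obtain ⟨z, rfl⟩ := exists_eq_triple_of_card_eq_three (hS.1 b hb) hx hy hxy
  exact ⟨z, hb⟩

lemma eq_of_triple_mem (hS : IsSteiner B) {v x x' y : V} (h : ({v, x, y} : Finset V) ∈ B)
    (h' : ({v, x', y} : Finset V) ∈ B) : x' = x := by
  obtain ⟨hvx', -, hx'y⟩ := hS.ne_of_triple_mem h'
  have hmem : x' ∈ ({v, x, y} : Finset V) := by
    rw [hS.eq_of_mem_of_mem (hS.ne_of_triple_mem h).2.1 h h'
      (by simp) (by simp) (by simp) (by simp)]
    simp
  simp only [mem_insert, mem_singleton] at hmem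
  rcases hmem with h | h | h
  · exact absurd h.symm hvx'
  · exact h
  · exact absurd h hx'y

end IsSteiner

namespace IsOrientation

variable {V : Type*} [DecidableEq V] {B : Finset (Finset V)} {r : V → V → Prop}

lemma irrefl (hr : IsOrientation B r) (x : V) : ¬ r x x := fun h => hr.1 x x h h

lemma ne_of_rel (hr : IsOrientation B r) {x y : V} (h : r x y) : x ≠ y := by
  rintro rfl
  exact hr.irrefl x h

lemma rel_cycle (hr : IsOrientation B r) {x y z : V} (hb : ({x, y, z} : Finset V) ∈ B)
    (hxy : r x y) : r y z ∧ r z x := by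
  rcases hr.2.1 x y z hb with ⟨-, hyz, hzx⟩ | ⟨-, -, hyx⟩
  · exact ⟨hyz, hzx⟩
  · exact absurd hyx (hr.1 x y hxy)

lemma rel_total (hr : IsOrientation B r) (hS : IsSteiner B) {x y : V} (hxy : x ≠ y) :
    r x y ∨ r y x := by
  obtain ⟨z, hb⟩ := hS.exists_triple_mem hxy
  rcases hr.2.1 x y z hb with ⟨h, -, -⟩ | ⟨-, -, h⟩
  · exact Or.inl h
  · exact Or.inr h

lemma rel_of_triple_mem_of_rel_left (hr : IsOrientation B r) {v x y : V}
    (hb : ({v, x, y} : Finset V) ∈ B) (hxv : r x v) : r v y := by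
  rw [insert_comm] at hb
  exact (hr.rel_cycle hb hxv).1

lemma rel_of_triple_mem_of_rel_right (hr : IsOrientation B r) {v x y : V}
    (hb : ({v, x, y} : Finset V) ∈ B) (hvx : r v x) : r y v :=
  (hr.rel_cycle hb hvx).2

lemma eq_of_mem_of_rel (hr : IsOrientation B r) {v w u w' : V}
    (hb : ({v, w, u} : Finset V) ∈ B) (hvw : r v w) (hw' : w' ∈ ({v, w, u} : Finset V))
    (hvw' : r v w') : w' = w := by
  simp only [mem_insert, mem_singleton] at hw'
  rcases hw' with rfl | rfl | rfl
  · exact absurd hvw' (hr.irrefl _)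
  · rfl
  · exact absurd hvw' (hr.1 _ _ (hr.rel_of_triple_mem_of_rel_right hb hvw))

end IsOrientation

section Automorphism

variable {V : Type*} [DecidableEq V] {B : Finset (Finset V)}

def IsOppositePoint (B : Finset (Finset V)) (t : Finset V) (w : V) : Prop :=
  w ∉ t ∧ ∀ a ∈ t, ∀ b ∈ t, a ≠ b → ({a, b, w} : Finset V) ∉ B

lemma IsOppositePoint.image {σ : Equiv.Perm V} (hσ : IsAutomorphism B σ) {t : Finset V} {w : V}
    (h : IsOppositePoint B t w) : IsOppositePoint B (t.image σ) (σ w) := by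
  refine ⟨fun hw => h.1 (σ.injective.mem_finset_image.1 hw), ?_⟩
  intro _ hσa _ hσb hab hblock
  obtain ⟨a, ha, rfl⟩ := mem_image.1 hσa
  obtain ⟨b, hb, rfl⟩ := mem_image.1 hσb
  refine h.2 a ha b hb (fun h' => hab (h' ▸ rfl)) ((hσ _).1 ?_)
  rwa [image_insert, image_insert, image_singleton]

lemma isAutomorphism_of_forall_image_mem {σ : Equiv.Perm V} (h : ∀ b ∈ B, b.image σ ∈ B) :
    IsAutomorphism B σ := by
  have hinj : Function.Injective (fun b : Finset V => b.image σ) := image_injective σ.injective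
  have hB : B.image (fun b => b.image σ) = B :=
    eq_of_subset_of_card_le (image_subset_iff.2 h) (card_image_of_injective B hinj).ge
  refine fun b => ⟨fun hb => ?_, h b⟩
  rw [← hB] at hb
  obtain ⟨c, hc, hcb⟩ := mem_image.1 hb
  exact hinj hcb ▸ hc

end Automorphism

section Neighbors

variable {V : Type*} [Fintype V] {r : V → V → Prop}

open scoped Classical in
noncomputable def inNeighbors (r : V → V → Prop) (v : V) : Finset V :=
  univ.filter (fun x => r x v)

open scoped Classical in
noncomputable def outNeighbors (r : V → V → Prop) (v : V) : Finset V :=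
  univ.filter (fun y => r v y)

@[simp]
lemma mem_inNeighbors {v x : V} : x ∈ inNeighbors r v ↔ r x v := by
  simp [inNeighbors]

@[simp]
lemma mem_outNeighbors {v y : V} : y ∈ outNeighbors r v ↔ r v y := by
  simp [outNeighbors]

variable [DecidableEq V] {B : Finset (Finset V)}

lemma mem_orientBlocks {b : Finset V} : b ∈ orientBlocks r ↔ ∃ v, inNeighbors r v = b := by
  simp [orientBlocks, inNeighbors]

lemma inNeighbors_mem_orientBlocks (r : V → V → Prop) (v : V) :
    inNeighbors r v ∈ orientBlocks r :=
  mem_orientBlocks.2 ⟨v, rfl⟩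

lemma card_inNeighbors_le_card_outNeighbors (hS : IsSteiner B) (hr : IsOrientation B r)
    (v : V) : #(inNeighbors r v) ≤ #(outNeighbors r v) := by
  refine card_le_card_of_forall_subsingleton (fun a t => ({v, a, t} : Finset V) ∈ B)
    (fun a ha => ?_) (fun t _ a ha a' ha' => hS.eq_of_triple_mem ha'.2 ha.2)
  have hav : r a v := mem_inNeighbors.1 ha
  obtain ⟨t, ht⟩ := hS.exists_triple_mem (hr.ne_of_rel hav).symm
  exact ⟨t, mem_outNeighbors.2 (hr.rel_of_triple_mem_of_rel_left ht hav), ht⟩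

lemma card_outNeighbors_le_card_inNeighbors (hS : IsSteiner B) (hr : IsOrientation B r)
    (v : V) : #(outNeighbors r v) ≤ #(inNeighbors r v) := by
  refine card_le_card_of_forall_subsingleton (fun w u => ({v, w, u} : Finset V) ∈ B)
    (fun w hw => ?_) (fun u _ w hw w' hw' => hS.eq_of_triple_mem hw'.2 hw.2)
  have hvw : r v w := mem_outNeighbors.1 hw
  obtain ⟨u, hu⟩ := hS.exists_triple_mem (hr.ne_of_rel hvw)
  exact ⟨u, mem_inNeighbors.2 (hr.rel_of_triple_mem_of_rel_right hu hvw), hu⟩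

lemma card_inNeighbors_add_card_outNeighbors (hS : IsSteiner B) (hr : IsOrientation B r)
    (v : V) : #(inNeighbors r v) + #(outNeighbors r v) = Fintype.card V - 1 := by
  have hunion : inNeighbors r v ∪ outNeighbors r v = univ.erase v := by
    ext x
    simp only [mem_union, mem_inNeighbors, mem_outNeighbors, mem_erase, mem_univ, and_true]
    refine ⟨?_, fun hx => hr.rel_total hS hx⟩
    rintro (h | h) <;> rintro rfl <;> exact hr.irrefl _ h
  have hdisj : Disjoint (inNeighbors r v) (outNeighbors r v) :=
    disjoint_left.2 fun x hx hx' => hr.1 x v (mem_inNeighbors.1 hx) (mem_outNeighbors.1 hx')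
  rw [← card_union_of_disjoint hdisj, hunion, card_erase_of_mem (mem_univ v), card_univ]

lemma card_inNeighbors_eq_three (hF : IsFano B) (hr : IsOrientation B r) (v : V) :
    #(inNeighbors r v) = 3 ∧ #(outNeighbors r v) = 3 := by
  have := card_inNeighbors_add_card_outNeighbors hF.2 hr v
  have := card_inNeighbors_le_card_outNeighbors hF.2 hr v
  have := card_outNeighbors_le_card_inNeighbors hF.2 hr v
  have := hF.1
  omega

lemma outNeighbors_mem (hF : IsFano B) (hr : IsOrientation B r) (v : V) :
    outNeighbors r v ∈ B := by
  obtain ⟨w₁, w₂, w₃, h₁₂, h₁₃, h₂₃, hO⟩ :=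
    card_eq_three.1 (card_inNeighbors_eq_three hF hr v).2
  have hw : ∀ w ∈ outNeighbors r v, r v w := fun w hw => mem_outNeighbors.1 hw
  simp only [hO, mem_insert, mem_singleton, forall_eq_or_imp, forall_eq] at hw
  obtain ⟨hw₁, hw₂, hw₃⟩ := hw
  choose u hu using fun w (h : r v w) => hF.2.exists_triple_mem (hr.ne_of_rel h)
  have hne : ∀ {w w'} (h : r v w) (h' : r v w'), w ≠ w' →
      ({v, w, u w h} : Finset V) ≠ {v, w', u w' h'} := fun h h' hww' heq =>
    hww' (hr.eq_of_mem_of_rel (hu _ h) h (heq ▸ by simp) h').symm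
  rw [hO]
  exact hr.2.2 v w₁ _ w₂ _ w₃ _ (hu _ hw₁) (hu _ hw₂) (hu _ hw₃)
    (hne hw₁ hw₂ h₁₂) (hne hw₁ hw₃ h₁₃) (hne hw₂ hw₃ h₂₃) hw₁ hw₂ hw₃

lemma isOppositePoint_inNeighbors (hr : IsOrientation B r) (v : V) :
    IsOppositePoint B (inNeighbors r v) v := by
  refine ⟨fun h => hr.irrefl v (mem_inNeighbors.1 h), fun a ha b hb _ hab => ?_⟩
  rw [mem_inNeighbors] at ha hb
  rw [pair_comm, insert_comm] at hab
  exact hr.1 _ _ hb (hr.rel_of_triple_mem_of_rel_left hab ha)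

lemma eq_of_isOppositePoint_inNeighbors (hF : IsFano B) (hr : IsOrientation B r) {v w : V}
    (h : IsOppositePoint B (inNeighbors r v) w) : w = v := by
  by_contra hwv
  have hvw : r v w :=
    (hr.rel_total hF.2 hwv).resolve_left fun h' => h.1 (mem_inNeighbors.2 h')
  obtain ⟨u, hu⟩ := hF.2.exists_triple_mem (hr.ne_of_rel hvw)
  obtain ⟨a, ha, hau⟩ :=
    exists_mem_ne (by rw [(card_inNeighbors_eq_three hF hr v).1]; norm_num) u
  have hav : r a v := mem_inNeighbors.1 ha
  have haw : a ≠ w := fun h' => h.1 (h' ▸ ha)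
  -- The line `{a, w, z}` is neither the line `{v, w, u}` (as `a ≠ u`) nor the line of
  -- out-neighbours `O(v)` (as `a → v`), which forces `z → v`.
  obtain ⟨z, hz⟩ := hF.2.exists_triple_mem haw
  have hzv : z ≠ v := by
    rintro rfl
    rw [pair_comm, insert_comm] at hz
    rw [pair_comm] at hu
    exact hau (hF.2.eq_of_triple_mem hu hz)
  have hvz : ¬ r v z := by
    intro hvz
    have hline := hF.2.eq_of_mem_of_mem (hF.2.ne_of_triple_mem hz).2.2 hz
      (outNeighbors_mem hF hr v) (by simp) (by simp)
      (mem_outNeighbors.2 hvw) (mem_outNeighbors.2 hvz)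
    exact hr.1 _ _ hav (mem_outNeighbors.1 (hline ▸ by simp))
  have hzv' : r z v := (hr.rel_total hF.2 hzv).resolve_right hvz
  rw [pair_comm] at hz
  exact h.2 a ha z (mem_inNeighbors.2 hzv') (hF.2.ne_of_triple_mem hz).1 hz

lemma preserves_iff_image_inNeighbors {σ : Equiv.Perm V} :
    (∀ x y, r (σ x) (σ y) ↔ r x y) ↔
      ∀ v, (inNeighbors r v).image σ = inNeighbors r (σ v) := by
  refine ⟨fun h v => ?_, fun h x y => ?_⟩
  · ext x
    obtain ⟨x, rfl⟩ := σ.surjective x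
    rw [σ.injective.mem_finset_image, mem_inNeighbors, mem_inNeighbors, h]
  · have hx := Finset.ext_iff.1 (h y) (σ x)
    rwa [σ.injective.mem_finset_image, mem_inNeighbors, mem_inNeighbors, Iff.comm] at hx

lemma image_inNeighbors_of_isAutomorphism (hF : IsFano B) (hr : IsOrientation B r)
    {σ : Equiv.Perm V} (hσ : IsAutomorphism B σ) (hσr : IsAutomorphism (orientBlocks r) σ)
    (v : V) : (inNeighbors r v).image σ = inNeighbors r (σ v) := by
  obtain ⟨w, hw⟩ := mem_orientBlocks.1 ((hσr _).2 (inNeighbors_mem_orientBlocks r v))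
  have hopp := (isOppositePoint_inNeighbors hr v).image hσ
  rw [← hw] at hopp ⊢
  rw [eq_of_isOppositePoint_inNeighbors hF hr hopp]

end Neighbors

/-- An automorphism `σ` of a Fano plane `B` preserves an orientation `r` iff `σ`
is an automorphism of the associated orthogonal Fano plane `F_r`. -/
theorem preserves_orientation_iff_aut_orientBlocks {V : Type*} [DecidableEq V] [Fintype V]
    (B : Finset (Finset V)) (r : V → V → Prop) (σ : Equiv.Perm V)
    (hB : IsFano B) (hr : IsOrientation B r) (hσ : IsAutomorphism B σ) :
    (∀ x y : V, r (σ x) (σ y) ↔ r x y) ↔ IsAutomorphism (orientBlocks r) σ := by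
  rw [preserves_iff_image_inNeighbors]
  refine ⟨fun h => isAutomorphism_of_forall_image_mem fun b hb => ?_,
    image_inNeighbors_of_isAutomorphism hB hr hσ⟩
  obtain ⟨v, rfl⟩ := mem_orientBlocks.1 hb
  rw [h]
  exact inNeighbors_mem_orientBlocks r (σ v)
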